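/- Let v_i, c_i, v_j, c_j be positive reals with v_i/c_i^2 > v_j/c_j^2 and v_i/c_i < v_j/c_j, and set C* = (v_i c_j^2 − v_j c_i^2)/(v_j c_i − v_i c_j). Then C* > 0, and v_i/(c_i(c_i + C)) ≥ v_j/(c_j(c_j + C)) for all C in [0, C*), while v_i/(c_i(c_i + C)) < v_j/(c_j(c_j + C)) for all C > C*. -/

import Mathlib

/-!
Clearing the (positive) denominators, `φ(vⱼ, cⱼ, C) ≤ φ(vᵢ, cᵢ, C)` becomes the linear inequality
`C (vⱼ cᵢ - vᵢ cⱼ) ≤ vᵢ cⱼ² - vⱼ cᵢ²` in `C`. The two hypotheses say exactly that both coefficients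
are positive, so the comparison flips at the single point `C* = (vᵢ cⱼ² - vⱼ cᵢ²) / (vⱼ cᵢ - vᵢ cⱼ) > 0`.
-/

noncomputable def relDistFactor (v c C : ℝ) : ℝ := v / (c * (c + C))

theorem relDistFactor_le_relDistFactor_iff {vi ci vj cj C : ℝ} (hci : 0 < ci) (hcj : 0 < cj)
    (hciC : 0 < ci + C) (hcjC : 0 < cj + C) :
    relDistFactor vj cj C ≤ relDistFactor vi ci C ↔
      C * (vj * ci - vi * cj) ≤ vi * cj ^ 2 - vj * ci ^ 2 := by
  rw [relDistFactor, relDistFactor, div_le_div_iff₀ (by positivity) (by positivity)]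
  constructor <;> intro h <;> linarith

theorem relDistFactor_lt_relDistFactor_iff {vi ci vj cj C : ℝ} (hci : 0 < ci) (hcj : 0 < cj)
    (hciC : 0 < ci + C) (hcjC : 0 < cj + C) :
    relDistFactor vi ci C < relDistFactor vj cj C ↔
      vi * cj ^ 2 - vj * ci ^ 2 < C * (vj * ci - vi * cj) := by
  simpa only [not_le] using (relDistFactor_le_relDistFactor_iff hci hcj hciC hcjC).not

theorem stmt_4_general (vi ci vj cj : ℝ) (hci : 0 < ci) (hcj : 0 < cj)
    (h1 : vi / ci ^ 2 > vj / cj ^ 2) (h2 : vi / ci < vj / cj) :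
    0 < (vi * cj ^ 2 - vj * ci ^ 2) / (vj * ci - vi * cj) ∧
    (∀ C : ℝ, 0 ≤ C → C < (vi * cj ^ 2 - vj * ci ^ 2) / (vj * ci - vi * cj) →
      vi / (ci * (ci + C)) ≥ vj / (cj * (cj + C))) ∧
    (∀ C : ℝ, (vi * cj ^ 2 - vj * ci ^ 2) / (vj * ci - vi * cj) < C →
      vi / (ci * (ci + C)) < vj / (cj * (cj + C))) := by
  have hD : 0 < vj * ci - vi * cj := by
    rw [div_lt_div_iff₀ hci hcj] at h2; linarith
  have hN : 0 < vi * cj ^ 2 - vj * ci ^ 2 := by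
    rw [gt_iff_lt, div_lt_div_iff₀ (by positivity) (by positivity)] at h1; linarith
  have hC : 0 < (vi * cj ^ 2 - vj * ci ^ 2) / (vj * ci - vi * cj) := div_pos hN hD
  refine ⟨hC, fun C hC0 hCl => ?_, fun C hCl => ?_⟩
  · rw [lt_div_iff₀ hD] at hCl
    exact (relDistFactor_le_relDistFactor_iff hci hcj (by linarith) (by linarith)).2 hCl.le
  · have hC0 : 0 < C := hC.trans hCl
    rw [div_lt_iff₀ hD] at hCl
    exact (relDistFactor_lt_relDistFactor_iff hci hcj (by linarith) (by linarith)).2 hCl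

theorem stmt_4 (vi ci vj cj : ℝ) (hvi : 0 < vi) (hci : 0 < ci) (hvj : 0 < vj) (hcj : 0 < cj)
    (h1 : vi / ci ^ 2 > vj / cj ^ 2) (h2 : vi / ci < vj / cj) :
    0 < (vi * cj ^ 2 - vj * ci ^ 2) / (vj * ci - vi * cj) ∧
    (∀ C : ℝ, 0 ≤ C → C < (vi * cj ^ 2 - vj * ci ^ 2) / (vj * ci - vi * cj) →
      vi / (ci * (ci + C)) ≥ vj / (cj * (cj + C))) ∧
    (∀ C : ℝ, (vi * cj ^ 2 - vj * ci ^ 2) / (vj * ci - vi * cj) < C →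
      vi / (ci * (ci + C)) < vj / (cj * (cj + C))) :=
  stmt_4_general vi ci vj cj hci hcj h1 h2
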